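/- arXiv:1106.4770 — 2 statements merged into one kernel-verified Lean document; each statement's English description precedes it below -/
import Mathlib

section
/- Let 1 ≤ m = n, and let p, q ≥ 0 with p + q = m. Then Sylv^{p,q}(A,B) = C(m−1,q) · f + C(m−1,p) · g, where C(·,·) are binomial coefficients. -/
/-! Both sides have degree at most `m`, so it suffices to compare their coefficients of `x^m`
and their values at the `m` distinct points `β_j`. Everything rests on the exchange identity
`∑_{A' ⊆ S, |A'| = p} R(A',U) ∏_{i ∈ S∖A'} v(α_i) / R(A',S∖A') = ∏_{u ∈ U} v(u)`
for `|S| = p + |U|` and `deg v ≤ p`, proved by induction on `U`: as a function of one point of `U`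
the left side is a polynomial of degree `≤ p` that, by the induction hypothesis, agrees with the
right side at the `|S| > p` nodes `α_i`. Taking `v = R(x, B∖B')` shows that the constant double sum
`∑ R(A',B') R(A∖A',B∖B') / (R(A',A∖A') R(B',B∖B'))` equals `C(|B|, q)`. For the full `B` this is
the top coefficient `C(m,q) = C(m-1,q) + C(m-1,p)`; at `x = β_j` only the `B' ∌ β_j` survive, and
each such term is `f(β_j)` times the corresponding term for `B ∖ {β_j}`, giving `C(m-1,q) f(β_j)`.
-/

open Polynomial Finset

noncomputable section

variable {F : Type*} [Field F]

/-- Coefficient of a polynomial at an integer index (0 for negative indices). -/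
def coeffZ (f : F[X]) (z : ℤ) : F := if 0 ≤ z then f.coeff z.toNat else 0

/-- The `(m+n-2k) × (m+n-2k)` matrix `M_k(f,g)` whose determinant is the
`k`-th subresultant of `f` (of degree `m`) and `g` (of degree `n`). -/
def sresM (m n k : ℕ) (f g : F[X]) :
    Matrix (Fin (m + n - 2*k)) (Fin (m + n - 2*k)) F[X] := fun i j =>
  if (j : ℕ) = m + n - 2*k - 1 then
    if (i : ℕ) < n - k then X ^ (n - k - 1 - (i : ℕ)) * f
    else X ^ (m - k - 1 - ((i : ℕ) - (n - k))) * g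
  else
    if (i : ℕ) < n - k then C (coeffZ f ((m : ℤ) + (i : ℕ) - (j : ℕ)))
    else C (coeffZ g ((k : ℤ) + (i : ℕ) - (j : ℕ)))

/-- `M_k(f,g)` with the last column replaced by `(x^{n-k-1},…,x^0,0,…,0)ᵀ`. -/
def sresMF (m n k : ℕ) (f g : F[X]) :
    Matrix (Fin (m + n - 2*k)) (Fin (m + n - 2*k)) F[X] := fun i j =>
  if (j : ℕ) = m + n - 2*k - 1 then
    if (i : ℕ) < n - k then X ^ (n - k - 1 - (i : ℕ)) else 0
  else sresM m n k f g i j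

/-- `M_k(f,g)` with the last column replaced by `(0,…,0,x^{m-k-1},…,x^0)ᵀ`. -/
def sresMG (m n k : ℕ) (f g : F[X]) :
    Matrix (Fin (m + n - 2*k)) (Fin (m + n - 2*k)) F[X] := fun i j =>
  if (j : ℕ) = m + n - 2*k - 1 then
    if (i : ℕ) < n - k then 0 else X ^ (m - k - 1 - ((i : ℕ) - (n - k)))
  else sresM m n k f g i j

/-- The `k`-th subresultant `Sres_k(f,g)` w.r.t. degrees `m`, `n`. -/
def Sres (m n k : ℕ) (f g : F[X]) : F[X] := (sresM m n k f g).det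

/-- The polynomial `F_k(f,g)` w.r.t. degrees `m`, `n`. -/
def Fk (m n k : ℕ) (f g : F[X]) : F[X] := (sresMF m n k f g).det

/-- The polynomial `G_k(f,g)` w.r.t. degrees `m`, `n`. -/
def Gk (m n k : ℕ) (f g : F[X]) : F[X] := (sresMG m n k f g).det

/-- `R(Y,Z) = ∏_{y ∈ Y, z ∈ Z} (y - z)`. -/
def Rp {ι κ : Type*} (a : ι → F) (b : κ → F) (S : Finset ι) (T : Finset κ) : F :=
  ∏ i ∈ S, ∏ j ∈ T, (a i - b j)

/-- `R(x,Y) = ∏_{y ∈ Y} (x - y)` as a polynomial. -/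
def RX {ι : Type*} (a : ι → F) (S : Finset ι) : F[X] :=
  ∏ i ∈ S, (X - C (a i))

/-- Sylvester's double sum `Sylv^{p,q}(A,B)`. -/
def sylv {m n : ℕ} (A : Fin m → F) (B : Fin n → F) (p q : ℕ) : F[X] :=
  ∑ S ∈ (univ : Finset (Fin m)).powersetCard p,
    ∑ T ∈ (univ : Finset (Fin n)).powersetCard q,
      C ((Rp A B S T * Rp A B Sᶜ Tᶜ) / (Rp A A S Sᶜ * Rp B B T Tᶜ)) *
        (RX A S * RX B T)

end

section SylvesterSums

variable {F : Type*} [Field F]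

section Products

variable {ι κ : Type*}

lemma Rp_ne_zero {a : ι → F} {b : κ → F} {S : Finset ι} {T : Finset κ}
    (h : ∀ i ∈ S, ∀ j ∈ T, a i ≠ b j) : Rp a b S T ≠ 0 :=
  prod_ne_zero_iff.2 fun i hi => prod_ne_zero_iff.2 fun j hj => sub_ne_zero.2 (h i hi j hj)

lemma Rp_self_ne_zero {a : ι → F} {S T U : Finset ι} (ha : Set.InjOn a U) (hS : S ⊆ U)
    (hT : T ⊆ U) (hST : Disjoint S T) : Rp a a S T ≠ 0 :=
  Rp_ne_zero fun _ hi _ hj hij => disjoint_left.1 hST hi (ha (hS hi) (hT hj) hij ▸ hj)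

lemma Rp_eq_mul_Rp_erase [DecidableEq κ] (a : ι → F) (b : κ → F) (S : Finset ι)
    {T : Finset κ} {j : κ} (hj : j ∈ T) :
    Rp a b S T = (∏ i ∈ S, (a i - b j)) * Rp a b S (T.erase j) := by
  simp only [Rp, ← prod_mul_distrib]
  exact prod_congr rfl fun i _ => (mul_prod_erase T (fun j => a i - b j) hj).symm

lemma RX_eval (a : ι → F) (S : Finset ι) (x : F) : (RX a S).eval x = ∏ i ∈ S, (x - a i) := by
  simp [RX, eval_prod]

lemma prod_RX_eval (a : ι → F) (b : κ → F) (S : Finset ι) (T : Finset κ) :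
    ∏ i ∈ S, (RX b T).eval (a i) = Rp a b S T := by
  simp only [RX_eval, Rp]

lemma RX_monic (a : ι → F) (S : Finset ι) : (RX a S).Monic :=
  monic_prod_of_monic _ _ fun i _ => monic_X_sub_C (a i)

lemma RX_natDegree (a : ι → F) (S : Finset ι) : (RX a S).natDegree = #S := by
  simp [RX, natDegree_prod_of_monic _ _ fun i _ => monic_X_sub_C (a i)]

lemma RX_coeff_of_card_eq (a : ι → F) {S : Finset ι} {n : ℕ} (h : #S = n) :
    (RX a S).coeff n = 1 := by
  simpa [RX_natDegree, h] using (RX_monic a S).coeff_natDegree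

lemma prod_sub_eq_neg_one_pow_mul (a : ι → F) (S : Finset ι) (x : F) :
    ∏ i ∈ S, (a i - x) = (-1) ^ #S * ∏ i ∈ S, (x - a i) := by
  rw [← prod_neg]
  simp only [neg_sub]

lemma natDegree_prod_C_sub_X_le (a : ι → F) (s : Finset ι) :
    (∏ i ∈ s, (C (a i) - X)).natDegree ≤ #s := by
  refine (natDegree_prod_le _ _).trans ?_
  rw [card_eq_sum_ones]
  refine sum_le_sum fun i _ => ?_
  rw [← neg_sub, natDegree_neg, natDegree_X_sub_C]

end Products

section Exchange

variable {ι κ : Type*} [DecidableEq ι] {a : ι → F}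

lemma prod_sdiff_div_Rp_mul_prod_sub (φ : ι → F) {S A' : Finset ι} {i₀ : ι}
    (ha : Set.InjOn a S) (hAS : A' ⊆ S) (hi₀ : i₀ ∈ S \ A') :
    (∏ i ∈ S \ A', φ i) / Rp a a A' (S \ A') * ∏ i ∈ A', (a i - a i₀)
      = φ i₀ * ((∏ i ∈ S.erase i₀ \ A', φ i) / Rp a a A' (S.erase i₀ \ A')) := by
  obtain ⟨hi₀S, hi₀A'⟩ := mem_sdiff.1 hi₀
  have hne : ∏ i ∈ A', (a i - a i₀) ≠ 0 := prod_ne_zero_iff.2 fun i hi =>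
    sub_ne_zero.2 fun h => hi₀A' (ha (hAS hi) hi₀S h ▸ hi)
  rw [erase_sdiff_comm, ← mul_prod_erase _ _ hi₀, Rp_eq_mul_Rp_erase a a A' hi₀]
  field_simp

lemma sum_powersetCard_div_Rp_mul_prod_sub (u : Finset ι → F) (φ : ι → F) (p : ℕ)
    {S : Finset ι} {i₀ : ι} (ha : Set.InjOn a S) (hi₀ : i₀ ∈ S) :
    ∑ A' ∈ S.powersetCard p, u A' * (∏ i ∈ S \ A', φ i) / Rp a a A' (S \ A')
        * ∏ i ∈ A', (a i - a i₀)
      = φ i₀ * ∑ A' ∈ (S.erase i₀).powersetCard p,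
          u A' * (∏ i ∈ S.erase i₀ \ A', φ i) / Rp a a A' (S.erase i₀ \ A') := by
  rw [mul_sum, ← sum_subset (powersetCard_mono (erase_subset i₀ S))]
  · refine sum_congr rfl fun A' hA' => ?_
    obtain ⟨hA'S, hi₀A'⟩ := subset_erase.1 (mem_powersetCard.1 hA').1
    rw [mul_div_assoc, mul_assoc,
      prod_sdiff_div_Rp_mul_prod_sub φ ha hA'S (mem_sdiff.2 ⟨hi₀, hi₀A'⟩)]
    ring
  · intro A' hA' hA'_erase
    obtain ⟨hA'S, hA'card⟩ := mem_powersetCard.1 hA'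
    have hi₀A' : i₀ ∈ A' := by
      by_contra h
      exact hA'_erase (mem_powersetCard.2 ⟨subset_erase.2 ⟨hA'S, h⟩, hA'card⟩)
    rw [prod_eq_zero hi₀A' (sub_self _), mul_zero]

theorem sum_powersetCard_Rp_mul_prod_eval_div (c : κ → F) {v : F[X]} {p : ℕ}
    (hv : v.natDegree ≤ p) (U : Finset κ) :
    ∀ S : Finset ι, Set.InjOn a S → #S = p + #U →
      ∑ A' ∈ S.powersetCard p, Rp a c A' U * (∏ i ∈ S \ A', v.eval (a i)) / Rp a a A' (S \ A')
        = ∏ k ∈ U, v.eval (c k) := by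
  induction U using Finset.cons_induction with
  | empty =>
    intro S _ hS
    rw [card_empty, add_zero] at hS
    simp [← hS, Rp]
  | cons k U hk ih =>
    intro S ha hS
    rw [card_cons] at hS
    -- the left-hand side for `cons k U`, as a polynomial in the point `c k`
    set G : F[X] := ∑ A' ∈ S.powersetCard p,
      C (Rp a c A' U * (∏ i ∈ S \ A', v.eval (a i)) / Rp a a A' (S \ A'))
        * ∏ i ∈ A', (C (a i) - X)
    have hG_eval : ∀ x, G.eval x = ∑ A' ∈ S.powersetCard p,
        Rp a c A' U * (∏ i ∈ S \ A', v.eval (a i)) / Rp a a A' (S \ A')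
          * ∏ i ∈ A', (a i - x) := by
      intro x
      simp [G, eval_finsetSum, eval_prod]
    have hG_deg : G.natDegree ≤ p := natDegree_sum_le_of_forall_le _ _ fun A' hA' =>
      (natDegree_C_mul_le _ _).trans
        ((natDegree_prod_C_sub_X_le a A').trans (mem_powersetCard.1 hA').2.le)
    set K := ∏ k ∈ U, v.eval (c k)
    have hG_nodes : ∀ i₀ ∈ S, G.eval (a i₀) = (C K * v).eval (a i₀) := by
      intro i₀ hi₀
      rw [hG_eval, sum_powersetCard_div_Rp_mul_prod_sub _ _ p ha hi₀,
        ih _ (ha.mono (erase_subset i₀ S)) (by rw [card_erase_of_mem hi₀]; omega),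
        eval_mul, eval_C, mul_comm]
    have hlt : ∀ P : F[X], P.natDegree ≤ p → P.degree < #S := fun P hP =>
      (degree_le_of_natDegree_le hP).trans_lt (by exact_mod_cast (by omega : p < #S))
    have hG : G = C K * v := eq_of_degrees_lt_of_eval_index_eq S ha (hlt G hG_deg)
      (hlt _ ((natDegree_C_mul_le _ _).trans hv)) hG_nodes
    calc _ = G.eval (c k) := by
          rw [hG_eval]
          refine sum_congr rfl fun A' _ => ?_
          simp only [Rp, prod_cons, prod_mul_distrib]
          ring
      _ = _ := by rw [hG, eval_mul, eval_C, prod_cons, mul_comm]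

end Exchange

section DoubleSum

variable {ι κ : Type*} [DecidableEq ι] [DecidableEq κ] {a : ι → F} {b : κ → F}

lemma sum_powersetCard_Rp_mul_Rp_div_eq_one {S : Finset ι} {Sb B' : Finset κ} {p : ℕ}
    (ha : Set.InjOn a S) (hb : Set.InjOn b Sb) (hB' : B' ⊆ Sb) (hS : #S = p + #B')
    (hSb : #Sb ≤ #S) :
    ∑ A' ∈ S.powersetCard p, Rp a b A' B' * Rp a b (S \ A') (Sb \ B')
      / (Rp a a A' (S \ A') * Rp b b B' (Sb \ B')) = 1 := by
  have hv : (RX b (Sb \ B')).natDegree ≤ p := by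
    rw [RX_natDegree, card_sdiff_of_subset hB']
    omega
  have hR : Rp b b B' (Sb \ B') ≠ 0 := Rp_self_ne_zero hb hB' sdiff_subset disjoint_sdiff
  have key := sum_powersetCard_Rp_mul_prod_eval_div b hv B' S ha hS
  simp only [prod_RX_eval] at key
  simp only [← div_div, ← sum_div, key, div_self hR]

lemma sum_sum_powersetCard_Rp_div_eq_choose {S : Finset ι} {Sb : Finset κ} {p q : ℕ}
    (ha : Set.InjOn a S) (hb : Set.InjOn b Sb) (hS : #S = p + q) (hSb : #Sb ≤ #S) :
    ∑ A' ∈ S.powersetCard p, ∑ B' ∈ Sb.powersetCard q, Rp a b A' B' * Rp a b (S \ A') (Sb \ B')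
      / (Rp a a A' (S \ A') * Rp b b B' (Sb \ B')) = (#Sb).choose q := by
  rw [sum_comm, sum_congr rfl fun B' hB' => sum_powersetCard_Rp_mul_Rp_div_eq_one ha hb
    (mem_powersetCard.1 hB').1 (by rw [(mem_powersetCard.1 hB').2, hS]) hSb]
  simp

end DoubleSum

lemma degree_sub_lt_of_natDegree_le_of_coeff_eq {R : Type*} [Ring R] {f g : R[X]} {n : ℕ}
    (hf : f.natDegree ≤ n) (hg : g.natDegree ≤ n) (h : f.coeff n = g.coeff n) :
    (f - g).degree < n := by
  rw [degree_lt_iff_coeff_zero]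
  intro k hk
  rw [coeff_sub, sub_eq_zero]
  rcases hk.eq_or_lt with rfl | hk
  · exact h
  · rw [coeff_eq_zero_of_natDegree_lt (hf.trans_lt hk),
      coeff_eq_zero_of_natDegree_lt (hg.trans_lt hk)]

lemma Nat.choose_add_eq_choose_pred_add (p q : ℕ) (h : 0 < p + q) :
    (p + q).choose q = (p + q - 1).choose q + (p + q - 1).choose p := by
  cases p with
  | zero =>
    obtain ⟨q, rfl⟩ := Nat.exists_eq_succ_of_ne_zero (by omega : q ≠ 0)
    simp
  | succ p =>
    rw [show p + 1 + q - 1 = p + q by omega, ← Nat.choose_symm_add,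
      show p + 1 + q = p + q + 1 by omega, Nat.choose_succ_succ', Nat.choose_symm_add]

lemma Rp_div_mul_eval_eq_of_notMem {ι : Type*} [Fintype ι] [DecidableEq ι] (A : ι → F)
    {B : ι → F} (hB : Function.Injective B) {S T : Finset ι} {j : ι} (hj : j ∉ T)
    (hST : #Sᶜ = #T) :
    Rp A B S T * Rp A B Sᶜ Tᶜ / (Rp A A S Sᶜ * Rp B B T Tᶜ)
        * ((RX A S).eval (B j) * (RX B T).eval (B j))
      = Rp A B S T * Rp A B (univ \ S) (univ.erase j \ T)
          / (Rp A A S (univ \ S) * Rp B B T (univ.erase j \ T)) * (RX A univ).eval (B j) := by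
  have hne : ∏ k ∈ T, (B j - B k) ≠ 0 :=
    prod_ne_zero_iff.2 fun k hk => sub_ne_zero.2 fun h => hj (hB h ▸ hk)
  rw [Rp_eq_mul_Rp_erase A B Sᶜ (mem_compl.2 hj), Rp_eq_mul_Rp_erase B B T (mem_compl.2 hj),
    RX_eval, RX_eval, RX_eval, ← prod_mul_prod_compl S, prod_sub_eq_neg_one_pow_mul A Sᶜ,
    prod_sub_eq_neg_one_pow_mul B T, hST]
  simp only [compl_eq_univ_sdiff, ← erase_sdiff_comm]
  field_simp

section Sylvester

variable {m : ℕ} (A B : Fin m → F) {p q : ℕ}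

lemma sylv_natDegree_le (hpq : p + q = m) : (sylv A B p q).natDegree ≤ m := by
  refine natDegree_sum_le_of_forall_le _ _ fun S hS => natDegree_sum_le_of_forall_le _ _
    fun T hT => (natDegree_C_mul_le _ _).trans (natDegree_mul_le.trans ?_)
  rw [RX_natDegree, RX_natDegree, (mem_powersetCard.1 hS).2, (mem_powersetCard.1 hT).2, hpq]

lemma sylv_coeff (hA : Function.Injective A) (hB : Function.Injective B) (hpq : p + q = m) :
    (sylv A B p q).coeff m = m.choose q := by
  have hmonic : ∀ S ∈ univ.powersetCard p, ∀ T ∈ univ.powersetCard q,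
      (RX A S * RX B T).coeff m = 1 := fun S hS T hT => by
    have h := ((RX_monic A S).mul (RX_monic B T)).coeff_natDegree
    rwa [(RX_monic A S).natDegree_mul (RX_monic B T), RX_natDegree, RX_natDegree,
      (mem_powersetCard.1 hS).2, (mem_powersetCard.1 hT).2, hpq] at h
  simp only [sylv, finsetSum_coeff, coeff_C_mul]
  rw [sum_congr rfl fun S hS => sum_congr rfl fun T hT => by rw [hmonic S hS T hT, mul_one]]
  simp only [compl_eq_univ_sdiff]
  rw [sum_sum_powersetCard_Rp_div_eq_choose hA.injOn hB.injOn (by rw [card_fin, hpq]) le_rfl,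
    card_fin]

lemma sylv_eval_right (hA : Function.Injective A) (hB : Function.Injective B)
    (hpq : p + q = m) (j : Fin m) :
    (sylv A B p q).eval (B j) = (m - 1).choose q * (RX A univ).eval (B j) := by
  have hvanish : ∀ T ∈ univ.powersetCard q, T ∉ (univ.erase j).powersetCard q →
      (RX B T).eval (B j) = 0 := fun T hT hTj => by
    have hjT : j ∈ T := by
      by_contra h
      exact hTj (mem_powersetCard.2
        ⟨subset_erase.2 ⟨subset_univ T, h⟩, (mem_powersetCard.1 hT).2⟩)
    rw [RX_eval]
    exact prod_eq_zero hjT (sub_self _)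
  simp only [sylv, eval_finsetSum, eval_mul, eval_C]
  rw [sum_congr rfl fun S _ => (sum_subset (powersetCard_mono (erase_subset j univ))
    fun T hT hTj => by rw [hvanish T hT hTj, mul_zero, mul_zero]).symm]
  rw [sum_congr rfl fun S hS => sum_congr rfl fun T hT =>
    Rp_div_mul_eval_eq_of_notMem A hB (subset_erase.1 (mem_powersetCard.1 hT).1).2
      (by rw [card_compl, Fintype.card_fin, (mem_powersetCard.1 hS).2,
        (mem_powersetCard.1 hT).2]; omega)]
  simp only [← sum_mul]
  rw [sum_sum_powersetCard_Rp_div_eq_choose hA.injOn hB.injOn (by rw [card_fin, hpq])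
    (card_erase_le), card_erase_of_mem (mem_univ j), card_fin]

end Sylvester

end SylvesterSums

/-- for `1 ≤ m = n` and `p + q = m`,
`Sylv^{p,q}(A,B) = C(m−1,q) f + C(m−1,p) g`. -/
theorem sylvester_double_sum_eq_deg {F : Type*} [Field F] {m : ℕ} (hm : 1 ≤ m)
    (A B : Fin m → F)
    (hA : Function.Injective A) (hB : Function.Injective B)
    (f g : Polynomial F) (hf : f = RX A Finset.univ) (hg : g = RX B Finset.univ)
    (p q : ℕ) (hpq : p + q = m) :
    sylv A B p q
      = ((m - 1).choose q : Polynomial F) * f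
          + ((m - 1).choose p : Polynomial F) * g := by
  subst hf hg
  refine eq_of_degree_sub_lt_of_eval_index_eq univ hB.injOn ?_ fun j _ => ?_
  · rw [card_fin]
    refine degree_sub_lt_of_natDegree_le_of_coeff_eq (sylv_natDegree_le A B hpq) ?_ ?_
    · exact natDegree_add_le_of_degree_le
        (natDegree_mul_le.trans (by rw [natDegree_natCast, RX_natDegree, card_fin, zero_add]))
        (natDegree_mul_le.trans (by rw [natDegree_natCast, RX_natDegree, card_fin, zero_add]))
    · rw [sylv_coeff A B hA hB hpq, coeff_add, coeff_natCast_mul, coeff_natCast_mul,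
        RX_coeff_of_card_eq A (card_fin m), RX_coeff_of_card_eq B (card_fin m),
        ← hpq, Nat.choose_add_eq_choose_pred_add p q (by omega)]
      push_cast
      ring
  · rw [sylv_eval_right A B hA hB hpq j, eval_add, eval_natCast_mul, eval_natCast_mul, RX_eval B,
      prod_eq_zero (mem_univ j) (sub_self _), mul_zero, add_zero]
end

section
/- Let 1 ≤ m = n−2, and let 0 ≤ p ≤ m and q ≥ 0 with p + q = n−1. Then Sylv^{p,q}(A,B) = (−1)^{p+1} · C(m,p) · f, where C(m,p) is the binomial coefficient. -/
open Polynomial Finset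

/-! Both sides have degree at most `m + 1`, so it suffices to compare them at the `m + 2`
distinct points `β_j`. At `β_j` only the terms with `β_j ∉ B'` survive, and for fixed `A'` they
sum to `-f(β_j) / R(A', A ∖ A')` times an exchange sum over the splittings `T ⊔ U` of
`B ∖ {β_j}` with `|U| = p`,
`∑ g(T) R(A ∖ A', U) / R(T, U)`, where `g(x) = ∏_{α ∈ A'} (α - x)`.
For any `g` of degree `≤ p` such a sum equals `[x^p] g · ∏_{α ∈ A ∖ A'} g(α)`, here
`(-1)^p R(A', A ∖ A')`: by induction on `A ∖ A'`, since as a function of the point removed from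
`A ∖ A'` the sum is a polynomial of degree `≤ p` whose values at the nodes are those of a
multiple of `g`; the base case is the top coefficient of Lagrange interpolation. -/

open Lagrange

theorem Polynomial.degree_lt_of_natDegree_le_of_lt {R : Type*} [Semiring R] {f : R[X]} {d n : ℕ}
    (hf : f.natDegree ≤ d) (hd : d < n) : f.degree < n :=
  (degree_le_of_natDegree_le hf).trans_lt (by exact_mod_cast hd)

theorem Finset.sum_powersetCard_succ_of_mem {ι M : Type*} [DecidableEq ι] [AddCommMonoid M]
    {s : Finset ι} {c : ι} (hc : c ∈ s) (k : ℕ) (f : Finset ι → M) :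
    ∑ T ∈ s.powersetCard (k + 1), f T =
      ∑ T ∈ (s.erase c).powersetCard (k + 1), f T +
        ∑ T ∈ (s.erase c).powersetCard k, f (insert c T) := by
  have hcs : c ∉ s.erase c := notMem_erase c s
  conv_lhs => rw [← insert_erase hc, powersetCard_succ_insert hcs]
  rw [sum_union, sum_image]
  · intro T hT T' hT' h
    have hcT : c ∉ T := fun h => hcs ((mem_powersetCard.1 hT).1 h)
    have hcT' : c ∉ T' := fun h => hcs ((mem_powersetCard.1 hT').1 h)
    rw [← erase_insert hcT, h, erase_insert hcT']
  · rw [disjoint_left]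
    rintro T hT hT'
    obtain ⟨T', -, rfl⟩ := mem_image.1 hT'
    exact hcs ((mem_powersetCard.1 hT).1 (mem_insert_self c T'))

noncomputable section Exchange

variable {F ι κ : Type*} [Field F]

theorem prod_sub_swap (s : Finset ι) (f g : ι → F) :
    ∏ i ∈ s, (f i - g i) = (-1) ^ #s * ∏ i ∈ s, (g i - f i) := by
  simp_rw [← prod_neg, neg_sub]

theorem Rp_insert_left [DecidableEq κ] (a : κ → F) (b : ι → F) {l : κ} {c : Finset κ}
    (hl : l ∉ c) (T : Finset ι) :
    Rp a b (insert l c) T = (∏ j ∈ T, (a l - b j)) * Rp a b c T :=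
  prod_insert hl

theorem Rp_insert_right [DecidableEq ι] (a : κ → F) (b : ι → F) (S : Finset κ) {j : ι}
    {T : Finset ι} (hj : j ∉ T) : Rp a b S (insert j T) = (∏ i ∈ S, (a i - b j)) * Rp a b S T := by
  simp_rw [Rp, prod_insert hj, prod_mul_distrib]

theorem Rp_ne_zero_s15 {a : ι → F} (ha : Function.Injective a) {S T : Finset ι}
    (hST : Disjoint S T) : Rp a a S T ≠ 0 :=
  prod_ne_zero_iff.2 fun _ hi => prod_ne_zero_iff.2 fun _ hj =>
    sub_ne_zero.2 <| ha.ne fun h => disjoint_left.1 hST hi (h ▸ hj)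

variable [DecidableEq ι]

def exchangeWeight (g : F[X]) (a : κ → F) (c : Finset κ) (v : ι → F) (s T : Finset ι) : F :=
  (∏ i ∈ T, g.eval (v i)) * Rp a v c (s \ T) / Rp v v T (s \ T)

/-- Adding one point `l` to `c` multiplies the weights by the values at `a l` of a polynomial,
so that the sums for `insert l c` are values of `exchangePoly` for `c`. -/
def exchangePoly (g : F[X]) (a : κ → F) (c : Finset κ) (v : ι → F) (s : Finset ι) (k : ℕ) :
    F[X] :=
  ∑ T ∈ s.powersetCard k, C (exchangeWeight g a c v s T) * nodal (s \ T) v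

theorem eval_exchangePoly [DecidableEq κ] (g : F[X]) (a : κ → F) {l : κ} {c : Finset κ}
    (hl : l ∉ c) (v : ι → F) (s : Finset ι) (k : ℕ) :
    (exchangePoly g a c v s k).eval (a l) =
      ∑ T ∈ s.powersetCard k, exchangeWeight g a (insert l c) v s T := by
  simp_rw [exchangePoly, eval_finsetSum, eval_mul, eval_C, eval_nodal, exchangeWeight,
    Rp_insert_left a v hl]
  refine sum_congr rfl fun T _ => ?_
  ring

theorem natDegree_exchangePoly_le (g : F[X]) (a : κ → F) (c : Finset κ) (v : ι → F)
    (s : Finset ι) (k : ℕ) : (exchangePoly g a c v s k).natDegree ≤ #s - k := by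
  refine natDegree_sum_le_of_forall_le _ _ fun T hT => (natDegree_C_mul_le _ _).trans ?_
  obtain ⟨hTs, hTk⟩ := mem_powersetCard.1 hT
  rw [natDegree_nodal, card_sdiff_of_subset hTs, hTk]

theorem exchangeWeight_insert_mul {g : F[X]} (a : κ → F) (c : Finset κ) {v : ι → F}
    {s T : Finset ι} {i : ι} (hv : Set.InjOn v s) (hi : i ∈ s) (hT : T ⊆ s.erase i) :
    exchangeWeight g a c v s (insert i T) * (nodal (s.erase i \ T) v).eval (v i) =
      g.eval (v i) * exchangeWeight g a c v (s.erase i) T := by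
  have hiT : i ∉ T := fun h => notMem_erase i s (hT h)
  have hU : s \ insert i T = s.erase i \ T := by rw [sdiff_insert, erase_sdiff_comm]
  have hne : (nodal (s.erase i \ T) v).eval (v i) ≠ 0 :=
    eval_nodal_not_at_node fun j hj =>
      hv.ne hi (mem_of_mem_erase (mem_sdiff.1 hj).1) (ne_of_mem_erase (mem_sdiff.1 hj).1).symm
  rw [exchangeWeight, exchangeWeight, hU, prod_insert hiT, Rp_insert_left v v hiT, ← eval_nodal]
  field_simp

theorem eval_exchangePoly_node {g : F[X]} (a : κ → F) (c : Finset κ) {v : ι → F}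
    {s : Finset ι} {i : ι} (hv : Set.InjOn v s) (hi : i ∈ s) (k : ℕ) :
    (exchangePoly g a c v s (k + 1)).eval (v i) =
      g.eval (v i) * ∑ T ∈ (s.erase i).powersetCard k, exchangeWeight g a c v (s.erase i) T := by
  rw [exchangePoly, eval_finsetSum, sum_powersetCard_succ_of_mem hi, mul_sum]
  have hvanish : ∀ T ∈ (s.erase i).powersetCard (k + 1),
      (C (exchangeWeight g a c v s T) * nodal (s \ T) v).eval (v i) = 0 := fun T hT => by
    have hiT : i ∉ T := fun h => notMem_erase i s ((mem_powersetCard.1 hT).1 h)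
    rw [eval_mul, eval_nodal_at_node (mem_sdiff.2 ⟨hi, hiT⟩), mul_zero]
  rw [sum_eq_zero hvanish, zero_add]
  refine sum_congr rfl fun T hT => ?_
  have hU : s \ insert i T = s.erase i \ T := by rw [sdiff_insert, erase_sdiff_comm]
  rw [eval_mul, eval_C, hU, exchangeWeight_insert_mul a c hv hi (mem_powersetCard.1 hT).1]

theorem sum_exchangeWeight {g : F[X]} {p : ℕ} (hg : g.natDegree ≤ p) (a : κ → F)
    (c : Finset κ) {v : ι → F} {s : Finset ι} (hv : Set.InjOn v s) (hs : #s = p + #c + 1) :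
    ∑ T ∈ s.powersetCard (#c + 1), exchangeWeight g a c v s T =
      g.coeff p * ∏ l ∈ c, g.eval (a l) := by
  classical
  induction c using Finset.induction_on generalizing s with
  | empty =>
    rw [card_empty] at hs
    have hdeg : g.degree < #s := degree_lt_of_natDegree_le_of_lt hg (by omega)
    rw [prod_empty, mul_one, show p = #s - 1 by omega, coeff_eq_sum hv hdeg, card_empty,
      zero_add, powersetCard_one, sum_map]
    refine sum_congr rfl fun i _ => ?_
    simp [exchangeWeight, Rp, sdiff_singleton_eq_erase]
  | insert l c hl ih =>
    rw [card_insert_of_notMem hl] at hs ⊢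
    -- Both sides have degree `≤ p < #s` and, by the induction hypothesis, agree at the nodes.
    have hpoly : exchangePoly g a c v s (#c + 1 + 1) =
        C (g.coeff p * ∏ l ∈ c, g.eval (a l)) * g := by
      refine eq_of_degrees_lt_of_eval_index_eq s hv ?_ ?_ fun i hi => ?_
      · exact degree_lt_of_natDegree_le_of_lt (natDegree_exchangePoly_le ..) (by omega)
      · exact degree_lt_of_natDegree_le_of_lt ((natDegree_C_mul_le _ _).trans hg) (by omega)
      · rw [eval_exchangePoly_node a c hv hi, ih (hv.mono (erase_subset i s))
          (by rw [card_erase_of_mem hi]; omega), eval_mul, eval_C]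
        ring
    rw [← eval_exchangePoly g a hl, hpoly, eval_mul, eval_C, prod_insert hl]
    ring

end Exchange

noncomputable section Sylvester

variable {F ι κ : Type*} [Field F]

theorem RX_eq_nodal (a : ι → F) (S : Finset ι) : RX a S = nodal S a := rfl

theorem prod_C_sub_X_eq (a : ι → F) (S : Finset ι) :
    ∏ i ∈ S, (C (a i) - X) = C ((-1) ^ #S) * nodal S a := by
  rw [nodal, C_pow, C_neg, C_1, ← prod_neg]
  simp_rw [neg_sub]

theorem sum_Rp_mul_Rp_div_Rp [DecidableEq ι] (a : κ → F) {b : ι → F} (S c : Finset κ)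
    {s : Finset ι} (hb : Set.InjOn b s) (hs : #s = #S + #c + 1) :
    ∑ T ∈ s.powersetCard (#c + 1), Rp a b S T * Rp a b c (s \ T) / Rp b b T (s \ T) =
      (-1) ^ #S * Rp a a S c := by
  set g : F[X] := ∏ i ∈ S, (C (a i) - X)
  have hg : ∀ x, g.eval x = ∏ i ∈ S, (a i - x) := fun x => by simp [g, eval_prod]
  have hgC : g = C ((-1) ^ #S) * nodal S a := prod_C_sub_X_eq a S
  have hdeg : g.natDegree ≤ #S := by
    rw [hgC]; exact (natDegree_C_mul_le _ _).trans natDegree_nodal.le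
  have hcoeff : g.coeff #S = (-1) ^ #S := by
    rw [hgC, coeff_C_mul, ← natDegree_nodal (s := S) (v := a),
      nodal_monic.coeff_natDegree, mul_one]
  simpa only [exchangeWeight, hg, hcoeff, Rp, prod_comm (s := S)]
    using sum_exchangeWeight hdeg a c hb hs

theorem eval_sylvTerm_of_notMem [Fintype ι] [Fintype κ] [DecidableEq ι] [DecidableEq κ]
    (A : κ → F) {B : ι → F} (hB : Function.Injective B) (S : Finset κ) {T : Finset ι} {j : ι}
    (hj : j ∉ T) (hT : #T = #Sᶜ + 1) :
    (C (Rp A B S T * Rp A B Sᶜ Tᶜ / (Rp A A S Sᶜ * Rp B B T Tᶜ)) * (RX A S * RX B T)).eval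
        (B j) =
      -(RX A univ).eval (B j) *
        (Rp A B S T * Rp A B Sᶜ (univ.erase j \ T) / Rp B B T (univ.erase j \ T)) /
          Rp A A S Sᶜ := by
  set U := univ.erase j \ T
  have hjU : j ∉ U := fun h => notMem_erase j univ (mem_sdiff.1 h).1
  have hTc : Tᶜ = insert j U := by
    ext k
    by_cases hk : k = j <;> simp [U, hk, hj]
  have hW : ∏ k ∈ T, (B k - B j) ≠ 0 :=
    prod_ne_zero_iff.2 fun k hk => sub_ne_zero.2 (hB.ne fun h => hj (h ▸ hk))
  have hsign : ((-1) ^ #Sᶜ * (-1) ^ (#Sᶜ + 1) : F) = -1 := by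
    rw [← pow_add]; exact Odd.neg_one_pow ⟨#Sᶜ, by ring⟩
  rw [hTc, Rp_insert_right _ _ _ hjU, Rp_insert_right _ _ _ hjU, eval_mul, eval_mul, eval_C,
    RX_eq_nodal, RX_eq_nodal, RX_eq_nodal, eval_nodal, eval_nodal, eval_nodal,
    ← prod_mul_prod_compl S, prod_sub_swap T (fun _ => B j) B,
    prod_sub_swap Sᶜ A (fun _ => B j), hT]
  field_simp
  linear_combination Rp A B S T * (∏ i ∈ Sᶜ, (B j - A i)) * Rp A B Sᶜ U *
    (∏ i ∈ S, (B j - A i)) / (Rp A A S Sᶜ * Rp B B T U) * hsign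

theorem eval_sum_sylvTerm [Fintype ι] [Fintype κ] [DecidableEq ι] [DecidableEq κ]
    {A : κ → F} {B : ι → F} (hA : Function.Injective A) (hB : Function.Injective B)
    (hcard : Fintype.card ι = Fintype.card κ + 2) {p q : ℕ}
    (hpq : p + q = Fintype.card κ + 1) {S : Finset κ} (hS : #S = p) (j : ι) :
    (∑ T ∈ univ.powersetCard q,
        C (Rp A B S T * Rp A B Sᶜ Tᶜ / (Rp A A S Sᶜ * Rp B B T Tᶜ)) * (RX A S * RX B T)).eval
        (B j) = (-1) ^ (p + 1) * (RX A univ).eval (B j) := by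
  have hSc : #Sᶜ + p = Fintype.card κ := by rw [← hS, card_compl_add_card]
  obtain rfl : q = #Sᶜ + 1 := by omega
  have hvanish : ∀ T ∈ (univ.erase j).powersetCard #Sᶜ,
      (C (Rp A B S (insert j T) * Rp A B Sᶜ (insert j T)ᶜ /
          (Rp A A S Sᶜ * Rp B B (insert j T) (insert j T)ᶜ)) *
        (RX A S * RX B (insert j T))).eval (B j) = 0 := fun T _ => by
    rw [eval_mul, eval_mul, RX_eq_nodal B, eval_nodal_at_node (mem_insert_self j T), mul_zero,
      mul_zero]
  rw [eval_finsetSum, sum_powersetCard_succ_of_mem (mem_univ j), sum_eq_zero hvanish, add_zero,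
    sum_congr rfl fun T hT => eval_sylvTerm_of_notMem A hB S
      (fun h => notMem_erase j univ ((mem_powersetCard.1 hT).1 h)) (mem_powersetCard.1 hT).2,
    ← sum_div, ← mul_sum, sum_Rp_mul_Rp_div_Rp A S Sᶜ hB.injOn
      (by rw [card_erase_of_mem (mem_univ j), card_univ]; omega), hS,
    mul_div_assoc, mul_div_cancel_right₀ _ (Rp_ne_zero_s15 hA disjoint_compl_right)]
  ring

theorem eval_sylv {m : ℕ} {A : Fin m → F} {B : Fin (m + 2) → F} (hA : Function.Injective A)
    (hB : Function.Injective B) {p q : ℕ} (hpq : p + q = m + 1) (j : Fin (m + 2)) :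
    (sylv A B p q).eval (B j) = (-1) ^ (p + 1) * m.choose p * (RX A univ).eval (B j) := by
  rw [sylv, eval_finsetSum, sum_congr rfl fun S hS => eval_sum_sylvTerm hA hB
      (by simp) (by simpa only [Fintype.card_fin] using hpq)
      (mem_powersetCard.1 hS).2 j,
    sum_const, card_powersetCard, card_univ, Fintype.card_fin, nsmul_eq_mul]
  ring

theorem natDegree_sylv_le {m n : ℕ} (A : Fin m → F) (B : Fin n → F) (p q : ℕ) :
    (sylv A B p q).natDegree ≤ p + q := by
  refine natDegree_sum_le_of_forall_le _ _ fun S hS => natDegree_sum_le_of_forall_le _ _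
    fun T hT => (natDegree_C_mul_le _ _).trans (natDegree_mul_le.trans ?_)
  rw [RX_eq_nodal, RX_eq_nodal, natDegree_nodal, natDegree_nodal, (mem_powersetCard.1 hS).2,
    (mem_powersetCard.1 hT).2]

end Sylvester

theorem sylvester_double_sum_n_minus_one_general {F : Type*} [Field F] {m : ℕ}
    (A : Fin m → F) (B : Fin (m + 2) → F)
    (hA : Function.Injective A) (hB : Function.Injective B)
    (f : Polynomial F) (hf : f = RX A Finset.univ)
    (p q : ℕ) (hpq : p + q = m + 1) :
    sylv A B p q
      = (-1 : Polynomial F) ^ (p + 1) * (m.choose p : Polynomial F) * f := by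
  have hf_deg : f.natDegree = m := by rw [hf, RX_eq_nodal, natDegree_nodal, card_fin]
  have hC : (-1 : F[X]) ^ (p + 1) * (m.choose p : F[X]) = C ((-1 : F) ^ (p + 1) * m.choose p) := by
    simp
  refine eq_of_degrees_lt_of_eval_index_eq univ hB.injOn ?_ ?_ fun j _ => ?_
  · exact degree_lt_of_natDegree_le_of_lt (natDegree_sylv_le A B p q) (by rw [card_fin]; omega)
  · rw [hC]
    exact degree_lt_of_natDegree_le_of_lt ((natDegree_C_mul_le _ _).trans hf_deg.le)
      (by rw [card_fin]; omega)
  · rw [eval_sylv hA hB hpq, hf]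
    simp

/-- for `1 ≤ m = n − 2`, `0 ≤ p ≤ m` and `p + q = n − 1 = m + 1`,
`Sylv^{p,q}(A,B) = (−1)^{p+1} C(m,p) f`. Here `B` has length `n = m + 2`. -/
theorem sylvester_double_sum_n_minus_one {F : Type*} [Field F] {m : ℕ} (hm : 1 ≤ m)
    (A : Fin m → F) (B : Fin (m + 2) → F)
    (hA : Function.Injective A) (hB : Function.Injective B)
    (f : Polynomial F) (hf : f = RX A Finset.univ)
    (p q : ℕ) (hp : p ≤ m) (hpq : p + q = m + 1) :
    sylv A B p q
      = (-1 : Polynomial F) ^ (p + 1) * (m.choose p : Polynomial F) * f :=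
  sylvester_double_sum_n_minus_one_general A B hA hB f hf p q hpq
end
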